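/- Let P and g be finite-dimensional real vector spaces, a : g → P an injective linear map, and L ⊆ P ⊕ P* a Lagrangian subspace (for the canonical symmetric pairing) with L ∩ (P ⊕ 0) = a(g) ⊕ 0. Let ω be a skew-symmetric bilinear form on P ⊕ g* satisfying ω((a(v), 0), (u, η)) = η(v) for all v ∈ g, u ∈ P, η ∈ g*, and ω((u, 0), (u', 0)) = 0 for all u, u' ∈ P. If (u, η) ∈ P ⊕ g* and ξ ∈ P* satisfy (u, ξ) ∈ L and ξ(u') = ω((u, η), (u', η')) for all (u', η') ∈ P ⊕ g*, then u = 0, η = 0 and ξ = 0. -/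
import Mathlib


/-- The canonical symmetric pairing on `P ⊕ P*`. -/
def canPair {P : Type*} [AddCommGroup P] [Module ℝ P]
    (x y : P × Module.Dual ℝ P) : ℝ :=
  x.2 y.1 + y.2 x.1

/-- A subset of `P ⊕ P*` is Lagrangian if it equals its own orthogonal complement
with respect to the canonical symmetric pairing. -/
def IsLagrangian {P : Type*} [AddCommGroup P] [Module ℝ P]
    (L : Set (P × Module.Dual ℝ P)) : Prop :=
  L = {x | ∀ y ∈ L, canPair x y = 0}

/-- Let `a : g → P` be injective, `L ⊆ P ⊕ P*` Lagrangian with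
`L ∩ (P ⊕ 0) = a(g) ⊕ 0`, and let `ω` be a skew-symmetric bilinear form on `P ⊕ g*`
with `ω((a(v),0),(u,η)) = η(v)` and `ω((u,0),(u',0)) = 0`.  If `(u,η) ∈ P ⊕ g*` and
`ξ ∈ P*` satisfy `(u,ξ) ∈ L` and `ξ(u') = ω((u,η),(u',η'))` for all `(u',η')`,
then `u = 0`, `η = 0` and `ξ = 0`. -/
theorem local_model_poisson_along_zero_section
    {P g : Type*} [AddCommGroup P] [Module ℝ P] [FiniteDimensional ℝ P]
    [AddCommGroup g] [Module ℝ g] [FiniteDimensional ℝ g]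
    (a : g →ₗ[ℝ] P) (ha : Function.Injective a)
    (L : Set (P × Module.Dual ℝ P)) (hL : IsLagrangian L)
    (hLP : ∀ u : P, (u, (0 : Module.Dual ℝ P)) ∈ L ↔ u ∈ Set.range a)
    (ω : (P × Module.Dual ℝ g) →ₗ[ℝ] (P × Module.Dual ℝ g) →ₗ[ℝ] ℝ)
    (hω_skew : ∀ x y : P × Module.Dual ℝ g, ω x y = - ω y x)
    (hω1 : ∀ (v : g) (u : P) (η : Module.Dual ℝ g), ω (a v, 0) (u, η) = η v)
    (hω2 : ∀ u u' : P, ω (u, 0) (u', 0) = 0)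
    (u : P) (η : Module.Dual ℝ g) (ξ : Module.Dual ℝ P)
    (hmem : (u, ξ) ∈ L)
    (hξ : ∀ (u' : P) (η' : Module.Dual ℝ g), ξ u' = ω (u, η) (u', η')) :
    u = 0 ∧ η = 0 ∧ ξ = 0 := by
  -- Step 1: η = 0, by pairing (u, ξ) against (a v, 0) ∈ L.
  have hη : η = 0 := by
    ext v
    have hav : ((a v : P), (0 : Module.Dual ℝ P)) ∈ L := (hLP (a v)).mpr ⟨v, rfl⟩
    have hpair : canPair (u, ξ) (a v, 0) = 0 := by
      have := hL ▸ hmem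
      exact this (a v, 0) hav
    have h1 : ξ (a v) = 0 := by
      simpa [canPair] using hpair
    have h2 : ξ (a v) = - η v := by
      rw [hξ (a v) 0, hω_skew, hω1]
    simp only [LinearMap.zero_apply]
    linarith [h1, h2 ▸ h1]
  -- Step 2: ξ = 0.
  have hξ0 : ξ = 0 := by
    ext u'
    have := hξ u' 0
    have hsplit : ((u, η) : P × Module.Dual ℝ g) = (u, 0) + (0, η) := by
      simp [Prod.ext_iff]
    rw [hsplit] at this
    simp only [map_add, LinearMap.add_apply] at this
    rw [hη] at this
    simp only [LinearMap.zero_apply]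
    have hz : ω ((0 : P), (0 : Module.Dual ℝ g)) (u', 0) = 0 := by
      have : ((0 : P), (0 : Module.Dual ℝ g)) = (0 : P × Module.Dual ℝ g) := rfl
      rw [this]; simp
    rw [this, hω2, hz]; ring
  -- Step 3: u = 0.
  rw [hξ0] at hmem
  obtain ⟨v, hv⟩ := (hLP u).mp hmem
  have hv0 : v = 0 := by
    rw [← Module.forall_dual_apply_eq_zero_iff ℝ v]
    intro η'
    have := hξ 0 η'
    rw [hξ0, hη, ← hv] at this
    simpa [hω1] using this.symm
  refine ⟨?_, hη, hξ0⟩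
  rw [← hv, hv0, map_zero]
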